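/- arXiv:2503.03064 — 2 statements merged into one kernel-verified Lean document; each statement's English description precedes it below -/
import Mathlib

section
/- Fix distinct real numbers k ≠ k'. For ε ∈ [0,1] let X1(ε) be the two-point distribution (1-ε)δ_k + εδ_{k'} and let X2 = δ_k be deterministic. Then MEAN(X1(ε), X2) = sgn(k'-k) · ε / (ε + sqrt(ε(1-ε))) for ε ∈ (0,1), and MEAN(X1(ε), X2) → 0 = MEAN(X1(0), X2) as ε → 0+, i.e., MEAN is continuous at ε = 0. -/
/-! The law of `X1(ε) - k` is `(1-ε)δ_0 + εδ_d` with `d = k' - k`, so its mean, mean absolute value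
and variance are `εd`, `ε|d|` and `d²ε(1-ε)`, and `MEAN = sign d · ε / (ε + √(ε(1-ε)))` on all of
`[0,1]` (at `ε = 0` both sides are `0/0 = 0`). Cancelling `√ε` rewrites this as
`sign d · √ε / (√ε + √(1-ε))`, whose denominator does not vanish at `0`, hence the continuity. -/

open MeasureTheory Filter

noncomputable def twoPoint (k k' ε : ℝ) : Measure ℝ :=
  ENNReal.ofReal (1 - ε) • Measure.dirac k + ENNReal.ofReal ε • Measure.dirac k'

noncomputable def meanCmpDirac (c : ℝ) (ν : Measure ℝ) : ℝ :=
  (∫ x, (x - c) ∂ν) /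
    ((∫ x, |x - c| ∂ν) + Real.sqrt (∫ x, (x - c - ∫ y, (y - c) ∂ν)^2 ∂ν))

theorem Real.div_abs_eq_sign (x : ℝ) : x / |x| = Real.sign x := by
  rcases lt_trichotomy x 0 with hx | rfl | hx
  · rw [abs_of_neg hx, Real.sign_of_neg hx, div_neg, div_self hx.ne]
  · simp
  · rw [abs_of_pos hx, Real.sign_of_pos hx, div_self hx.ne']

theorem integral_twoPoint (k k' : ℝ) {ε : ℝ} (h0 : 0 ≤ ε) (h1 : ε ≤ 1) (f : ℝ → ℝ) :
    ∫ x, f x ∂(twoPoint k k' ε) = (1 - ε) * f k + ε * f k' := by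
  rw [twoPoint, integral_add_measure ((integrable_dirac (by simp)).smul_measure (by simp))
      ((integrable_dirac (by simp)).smul_measure (by simp)),
    integral_smul_measure, integral_smul_measure, integral_dirac, integral_dirac,
    ENNReal.toReal_ofReal (by linarith), ENNReal.toReal_ofReal h0, smul_eq_mul, smul_eq_mul]

theorem meanCmpDirac_twoPoint (k k' : ℝ) {ε : ℝ} (h0 : 0 ≤ ε) (h1 : ε ≤ 1) :
    meanCmpDirac k (twoPoint k k' ε) =
      Real.sign (k' - k) * ε / (ε + Real.sqrt (ε * (1 - ε))) := by
  set d := k' - k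
  have hmean : ∫ x, (x - k) ∂(twoPoint k k' ε) = ε * d := by
    rw [integral_twoPoint k k' h0 h1]; ring
  have habs : ∫ x, |x - k| ∂(twoPoint k k' ε) = ε * |d| := by
    rw [integral_twoPoint k k' h0 h1]; simp [d]
  have hvar : ∫ x, (x - k - ∫ y, (y - k) ∂(twoPoint k k' ε)) ^ 2 ∂(twoPoint k k' ε)
      = d ^ 2 * (ε * (1 - ε)) := by
    rw [hmean, integral_twoPoint k k' h0 h1]; ring
  rw [meanCmpDirac, hvar, hmean, habs, Real.sqrt_mul (sq_nonneg d), Real.sqrt_sq_eq_abs]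
  calc ε * d / (ε * |d| + |d| * √(ε * (1 - ε)))
      = d * ε / (|d| * (ε + √(ε * (1 - ε)))) := by ring
    _ = d / |d| * (ε / (ε + √(ε * (1 - ε)))) := mul_div_mul_comm _ _ _ _
    _ = Real.sign d * ε / (ε + √(ε * (1 - ε))) := by rw [Real.div_abs_eq_sign, mul_div_assoc]

theorem div_add_sqrt_mul_one_sub {ε : ℝ} (h0 : 0 ≤ ε) :
    ε / (ε + √(ε * (1 - ε))) = √ε / (√ε + √(1 - ε)) := by
  rcases h0.eq_or_lt with rfl | hpos
  · simp
  calc ε / (ε + √(ε * (1 - ε)))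
      = √ε * √ε / (√ε * (√ε + √(1 - ε))) := by
        rw [Real.sqrt_mul h0, mul_add, Real.mul_self_sqrt h0]
    _ = √ε / (√ε + √(1 - ε)) := mul_div_mul_left _ _ (Real.sqrt_pos.2 hpos).ne'

theorem tendsto_sqrt_div_add_sqrt_one_sub :
    Tendsto (fun ε : ℝ => √ε / (√ε + √(1 - ε))) (nhds 0) (nhds 0) := by
  have hcont : ContinuousAt (fun ε : ℝ => √ε / (√ε + √(1 - ε))) 0 :=
    ContinuousAt.div (by fun_prop) (by fun_prop) (by simp)
  simpa using hcont.tendsto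

theorem meanCmp_twoPoint_general (k k' : ℝ) :
    (∀ ε ∈ Set.Ioo (0 : ℝ) 1,
        meanCmpDirac k (twoPoint k k' ε) =
          Real.sign (k' - k) * ε / (ε + Real.sqrt (ε * (1 - ε)))) ∧
    meanCmpDirac k (twoPoint k k' 0) = 0 ∧
    Tendsto (fun ε => meanCmpDirac k (twoPoint k k' ε))
      (nhdsWithin 0 (Set.Ioi 0)) (nhds 0) := by
  refine ⟨fun ε hε => meanCmpDirac_twoPoint k k' hε.1.le hε.2.le, ?_, ?_⟩
  · simp [meanCmpDirac_twoPoint k k' le_rfl zero_le_one]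
  · have hsqrt : ∀ᶠ ε in nhdsWithin (0 : ℝ) (Set.Ioi 0),
        Real.sign (k' - k) * (√ε / (√ε + √(1 - ε))) = meanCmpDirac k (twoPoint k k' ε) := by
      filter_upwards [Ioo_mem_nhdsGT zero_lt_one] with ε hε
      rw [meanCmpDirac_twoPoint k k' hε.1.le hε.2.le, mul_div_assoc,
        div_add_sqrt_mul_one_sub hε.1.le]
    simpa using ((tendsto_sqrt_div_add_sqrt_one_sub.mono_left nhdsWithin_le_nhds).const_mul
      (Real.sign (k' - k))).congr' hsqrt

/-- for `X1(ε) ~ (1-ε)δ_k + εδ_{k'}` (`k ≠ k'`) and `X2 = δ_k`,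
`MEAN(X1(ε), X2) = sgn(k'-k) · ε / (ε + √(ε(1-ε)))` on `ε ∈ (0,1)`,
`MEAN(X1(0), X2) = 0`, and `MEAN(X1(ε), X2) → 0` as `ε → 0⁺`;
i.e. `MEAN` is continuous at `ε = 0`. -/
theorem meanCmp_twoPoint (k k' : ℝ) (hkk : k ≠ k') :
    (∀ ε ∈ Set.Ioo (0 : ℝ) 1,
        meanCmpDirac k (twoPoint k k' ε) =
          Real.sign (k' - k) * ε / (ε + Real.sqrt (ε * (1 - ε)))) ∧
    meanCmpDirac k (twoPoint k k' 0) = 0 ∧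
    Tendsto (fun ε => meanCmpDirac k (twoPoint k k' ε))
      (nhdsWithin 0 (Set.Ioi 0)) (nhds 0) :=
  meanCmp_twoPoint_general k k'
end

section
/- Let X1, X2 be random variables on {1, ..., K} that are comonotone, i.e., X1 = Q_{X1}(U) and X2 = Q_{X2}(U) for a single uniform random variable U on (0,1). Then P(X1 > X2) - P(X1 < X2) = ∫_0^1 sgn(Q_{X1}(p) - Q_{X2}(p)) dp, i.e., PS computed under the comonotone coupling equals QT. -/
/-!
Under the comonotone coupling the event `X₂ < X₁` is the preimage under `U` of
`{p | Q₂ p < Q₁ p}`, so its probability is the Lebesgue measure of that set inside `(0,1)`;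
likewise for `X₁ < X₂`. The integral of `sgn (Q₁ - Q₂)` is the difference of these two measures.
Quantile functions are monotone on `(0,1)`, which provides the measurability this needs.
-/

open MeasureTheory

/-- The `p`-quantile of a probability measure `ν` on `ℝ`:
`Q_ν(p) = inf {t | ν(-∞, t] ≥ p}`. -/
noncomputable def mQuantile (ν : Measure ℝ) (p : ℝ) : ℝ :=
  sInf {t : ℝ | p ≤ (ν (Set.Iic t)).toReal}

open ProbabilityTheory Set Filter

lemma monotoneOn_mQuantile (ν : Measure ℝ) [IsProbabilityMeasure ν] :
    MonotoneOn (mQuantile ν) (Ioo 0 1) := by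
  have hcdf : ∀ p, {t : ℝ | p ≤ (ν (Iic t)).toReal} = {t | p ≤ cdf ν t} := by
    intro p
    simp only [cdf_eq_real, measureReal_def]
  intro p hp q hq hpq
  simp only [mQuantile, hcdf]
  have hbdd : BddBelow {t | p ≤ cdf ν t} := by
    obtain ⟨a, ha⟩ := eventually_atBot.1 ((tendsto_cdf_atBot ν).eventually (gt_mem_nhds hp.1))
    exact ⟨a, fun t ht => le_of_not_gt fun hta => (ha t hta.le).not_ge ht⟩
  have hne : {t | q ≤ cdf ν t}.Nonempty :=
    (((tendsto_cdf_atTop ν).eventually (lt_mem_nhds hq.2)).exists).imp fun _ h => h.le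
  exact csInf_le_csInf hbdd hne fun t ht => hpq.trans ht

lemma sign_sub_eq_indicator_sub_indicator {α : Type*} (f g : α → ℝ) (x : α) :
    Real.sign (f x - g x) = {y | g y < f y}.indicator 1 x - {y | f y < g y}.indicator 1 x := by
  rcases lt_trichotomy (f x) (g x) with h | h | h
  · simp [h, h.not_gt, Real.sign_of_neg (sub_neg.2 h)]
  · simp [h]
  · simp [h, h.not_gt, Real.sign_of_pos (sub_pos.2 h)]

lemma integral_sign_sub {α : Type*} [MeasurableSpace α] {m : Measure α} [IsFiniteMeasure m]
    {f g : α → ℝ} (hf : AEMeasurable f m) (hg : AEMeasurable g m) :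
    ∫ x, Real.sign (f x - g x) ∂m = m.real {x | g x < f x} - m.real {x | f x < g x} := by
  have hgf := nullMeasurableSet_lt hg hf
  have hfg := nullMeasurableSet_lt hf hg
  simp_rw [sign_sub_eq_indicator_sub_indicator f g]
  rw [integral_sub ((integrable_const 1).indicator₀ hgf) ((integrable_const 1).indicator₀ hfg),
    integral_indicator₀ hgf, integral_indicator₀ hfg]
  simp

theorem ps_comonotone_eq_qt_general {Ω : Type*} [MeasurableSpace Ω]
    (μ : Measure Ω)
    (U : Ω → ℝ) (hU : Measurable U)
    (hUlaw : μ.map U = volume.restrict (Set.Ioo (0:ℝ) 1))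
    (ν1 ν2 : Measure ℝ)
    [IsProbabilityMeasure ν1] [IsProbabilityMeasure ν2]
    (X1 X2 : Ω → ℝ)
    (hX1 : X1 = fun ω => mQuantile ν1 (U ω))
    (hX2 : X2 = fun ω => mQuantile ν2 (U ω)) :
    (μ {ω | X2 ω < X1 ω}).toReal - (μ {ω | X1 ω < X2 ω}).toReal =
      ∫ p in Set.Ioo (0:ℝ) 1, Real.sign (mQuantile ν1 p - mQuantile ν2 p) := by
  subst hX1 hX2
  have hQ1 := aemeasurable_restrict_of_monotoneOn (μ := volume) measurableSet_Ioo
    (monotoneOn_mQuantile ν1)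
  have hQ2 := aemeasurable_restrict_of_monotoneOn (μ := volume) measurableSet_Ioo
    (monotoneOn_mQuantile ν2)
  have hpull : ∀ s, NullMeasurableSet s (volume.restrict (Ioo (0:ℝ) 1)) →
      (μ (U ⁻¹' s)).toReal = (volume.restrict (Ioo (0:ℝ) 1)).real s := by
    intro s hs
    rw [← hUlaw] at hs ⊢
    rw [measureReal_def, Measure.map_apply₀ hU.aemeasurable hs]
  rw [integral_sign_sub hQ1 hQ2, ← hpull _ (nullMeasurableSet_lt hQ2 hQ1),
    ← hpull _ (nullMeasurableSet_lt hQ1 hQ2)]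
  rfl

/-- if `ν1, ν2` are probability measures on `{1, …, K}` and
`X1 = Q_{ν1}(U)`, `X2 = Q_{ν2}(U)` are the comonotone coupling obtained from a
single uniform variable `U` on `(0,1)`, then the probability of superiority of
`X1` over `X2` equals the quantile comparison:
`P(X1 > X2) - P(X1 < X2) = ∫_0^1 sgn(Q_{ν1}(p) - Q_{ν2}(p)) dp`. -/
theorem ps_comonotone_eq_qt {Ω : Type*} [MeasurableSpace Ω]
    (μ : Measure Ω) [IsProbabilityMeasure μ]
    (U : Ω → ℝ) (hU : Measurable U)
    (hUlaw : μ.map U = volume.restrict (Set.Ioo (0:ℝ) 1))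
    (K : ℕ) (hK : 0 < K) (ν1 ν2 : Measure ℝ)
    [IsProbabilityMeasure ν1] [IsProbabilityMeasure ν2]
    (hs1 : ν1 ((fun n : ℕ => (n : ℝ)) '' Set.Icc 1 K)ᶜ = 0)
    (hs2 : ν2 ((fun n : ℕ => (n : ℝ)) '' Set.Icc 1 K)ᶜ = 0)
    (X1 X2 : Ω → ℝ)
    (hX1 : X1 = fun ω => mQuantile ν1 (U ω))
    (hX2 : X2 = fun ω => mQuantile ν2 (U ω)) :
    (μ {ω | X2 ω < X1 ω}).toReal - (μ {ω | X1 ω < X2 ω}).toReal =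
      ∫ p in Set.Ioo (0:ℝ) 1, Real.sign (mQuantile ν1 p - mQuantile ν2 p) :=
  ps_comonotone_eq_qt_general μ U hU hUlaw ν1 ν2 X1 X2 hX1 hX2
end
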